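/- Let E be a field of characteristic different from 2, let π ∈ E^×, and let r be a positive integer. Let w be a ℤ-valuation on the rational function field E(X) with w(2) = 0 such that 0 ≤ w(π) < r and w(X) ≥ 1. Then the binary quadratic form ⟨X^r − π, X^{r+1} + π⟩ is isotropic over the completion E(X)_w of E(X) with respect to w. -/

import Mathlib

/-!
Conventions used throughout this file.

* `ℤ`-valuations.  We use valuations with values in the multiplicative value group
  `Zm0 := WithZero (Multiplicative ℤ)` (Mathlib's `ℤₘ₀`).  The *additive* value `n : ℤ`
  of the paper corresponds to the multiplicative value `ofAdd (-n)`, so additive value `0`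
  corresponds to `(1 : Zm0)`, the valuation ring of `v` is `{x | v x ≤ 1}`, and
  additive inequalities get reversed.  A `ℤ`-valuation (a valuation with value group `ℤ`)
  is a `v : Valuation K Zm0` that is surjective.

* The valuation ring of `v` is `v.valuationSubring`, and the residue field `κ_v` is
  `IsLocalRing.ResidueField v.valuationSubring`.
-/

open Multiplicative

local notation "Zm0" => WithZero (Multiplicative ℤ)

universe u

/-- The diagonal quadratic form `⟨a 0, …, a (n-1)⟩` with coefficients in `K` is isotropic
over the completion `K_w` of `K` with respect to the valuation `w`. -/
def IsotropicOverCompletion {K : Type*} [Field K] {n : ℕ}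
    (w : Valuation K Zm0) (a : Fin n → K) : Prop :=
  haveI : Valued K Zm0 := Valued.mk' w
  ∃ y : Fin n → UniformSpace.Completion K, y ≠ 0 ∧
    ∑ i, (a i : UniformSpace.Completion K) * y i ^ 2 = 0

open Filter Topology

noncomputable def newton {K : Type*} [Field K] (u : K) : ℕ → K
  | 0 => 1
  | n+1 => (newton u n + u / newton u n) / 2

theorem exists_sqrt_completion {K : Type*} [Field K] [hv : Valued K Zm0]
    (h2 : Valued.v (2 : K) = 1) (u : K) (hu : Valued.v (u - 1) < 1) :
    ∃ s : UniformSpace.Completion K, s ^ 2 = (u : UniformSpace.Completion K) := by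
  set v := (Valued.v : Valuation K Zm0) with hvdef
  set ε := v (u - 1) with hε
  set t := newton u with ht
  have h2ne : (2 : K) ≠ 0 := by
    intro h; rw [h] at h2; simp at h2
  -- powers of ε
  have hεle : ε ≤ 1 := le_of_lt hu
  have pow_anti : ∀ {m n : ℕ}, n ≤ m → ε ^ m ≤ ε ^ n := by
    intro m n h
    obtain ⟨k, rfl⟩ := Nat.exists_eq_add_of_le h
    rw [pow_add]
    calc ε ^ n * ε ^ k ≤ ε ^ n * 1 := mul_le_mul_right (pow_le_one' hεle k) _
    _ = ε ^ n := mul_one _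
  have pow_lt_one : ∀ n : ℕ, ε ^ (n + 1) < 1 :=
    fun n => lt_of_le_of_lt (by simpa using pow_anti (Nat.le_add_left 1 n)) hu
  -- main induction
  have key : ∀ n, v (t n) = 1 ∧ v (t n ^ 2 - u) ≤ ε ^ (n + 1) := by
    intro n
    induction n with
    | zero =>
      have h0 : t 0 = 1 := rfl
      rw [h0]
      refine ⟨map_one v, ?_⟩
      rw [pow_one, one_pow, v.map_sub_swap]
    | succ n ih =>
      obtain ⟨h1, hle⟩ := ih
      have ha0 : t n ≠ 0 := by
        intro h; rw [h, map_zero] at h1; exact zero_ne_one h1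
      have hεlt : v (t n ^ 2 - u) < 1 := lt_of_le_of_lt hle (pow_lt_one n)
      have key1 : t (n+1) = (t n ^ 2 + u) / (2 * t n) := by
        show (t n + u / t n) / 2 = _
        field_simp
      have hnum : v (t n ^ 2 + u) = 1 := by
        have e : t n ^ 2 + u = 2 * t n ^ 2 + (u - t n ^ 2) := by ring
        rw [e, v.map_add_eq_of_lt_left]
        · rw [map_mul, map_pow, h1, h2, one_pow, mul_one]
        · rw [map_mul, map_pow, h1, h2, one_pow, mul_one, v.map_sub_swap]
          exact hεlt
      have hden : v (2 * t n) = 1 := by rw [map_mul, h1, h2, one_mul]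
      constructor
      · rw [key1, map_div₀, hnum, hden, div_one]
      · have key2 : t (n+1) ^ 2 - u = (t n ^ 2 - u) ^ 2 / (2 * t n) ^ 2 := by
          rw [key1]
          field_simp
          ring
        rw [key2, map_div₀, map_pow, map_pow, hden, one_pow, div_one]
        calc v (t n ^ 2 - u) ^ 2 ≤ (ε ^ (n+1)) ^ 2 := pow_le_pow_left' hle 2
        _ = ε ^ (2*(n+1)) := by rw [← pow_mul, mul_comm]
        _ ≤ ε ^ (n+2) := pow_anti (by omega)
  -- difference bounds
  have hdiff : ∀ n, v (t (n+1) - t n) ≤ ε ^ (n+1) := by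
    intro n
    obtain ⟨h1, hle⟩ := key n
    have ha0 : t n ≠ 0 := by
      intro h; rw [h, map_zero] at h1; exact zero_ne_one h1
    have key1 : t (n+1) - t n = (u - t n ^ 2) / (2 * t n) := by
      show (t n + u / t n) / 2 - t n = _
      field_simp
      ring
    rw [key1, map_div₀, map_mul, h2, h1, one_mul, div_one, v.map_sub_swap]
    exact hle
  have htel : ∀ n k, v (t (n+k) - t n) ≤ ε ^ (n+1) := by
    intro n k
    induction k with
    | zero => simp
    | succ k ih =>
      have e : t (n + (k+1)) - t n = (t (n + k + 1) - t (n + k)) + (t (n + k) - t n) := by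
        have h : n + (k+1) = n + k + 1 := by omega
        rw [h]; ring
      rw [e]
      refine le_trans (v.map_add _ _) (max_le ?_ ih)
      exact le_trans (hdiff (n+k)) (pow_anti (by omega))
  have hsmall : ∀ γ : Zm0ˣ, ∃ N : ℕ, ε ^ (N+1) < (γ : Zm0) := by
    intro γ
    rcases eq_or_ne ε 0 with h0 | h0
    · refine ⟨0, ?_⟩
      rw [h0]
      simpa using γ.zero_lt
    · obtain ⟨e, he⟩ := WithZero.ne_zero_iff_exists.mp h0
      obtain ⟨g, hg⟩ := WithZero.ne_zero_iff_exists.mp γ.ne_zero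
      have he1 : Multiplicative.toAdd e < 0 := by
        have : (e : Zm0) < ((1 : Multiplicative ℤ) : Zm0) := by
          rw [he, WithZero.coe_one]; exact hu
        exact WithZero.coe_lt_coe.mp this
      refine ⟨g.toAdd.natAbs, ?_⟩
      rw [← he, ← hg, ← WithZero.coe_pow, WithZero.coe_lt_coe]
      rw [← Multiplicative.toAdd_lt, toAdd_pow, nsmul_eq_mul]
      have h1 : Multiplicative.toAdd e ≤ -1 := by omega
      have h2' : -(g.toAdd.natAbs : ℤ) ≤ Multiplicative.toAdd g := by omega
      have h4 : ((g.toAdd.natAbs : ℤ) + 1) * Multiplicative.toAdd e ≤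
          ((g.toAdd.natAbs : ℤ) + 1) * (-1) :=
        mul_le_mul_of_nonneg_left h1 (by positivity)
      push_cast at h2' h4 ⊢
      linarith
  have hcauchy : CauchySeq t := by
    refine Valued.cauchy_iff.mpr ⟨Filter.map_neBot, fun γ => ?_⟩
    obtain ⟨N, hN⟩ := hsmall (Units.mk0 (MonoidWithZeroHom.ValueGroup₀.embedding γ.1) ((map_ne_zero_iff _ MonoidWithZeroHom.ValueGroup₀.embedding_injective).mpr γ.ne_zero))
    refine ⟨t '' Set.Ici N, Filter.image_mem_map (Filter.Ici_mem_atTop N), ?_⟩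
    rintro x ⟨m, hm, rfl⟩ y ⟨m', hm', rfl⟩
    rw [Valuation.restrict_lt_iff_lt_embedding]
    have hb : ∀ p q : ℕ, N ≤ p → p ≤ q → v (t q - t p) ≤ ε ^ (N+1) := by
      intro p q hp hpq
      obtain ⟨k, rfl⟩ := Nat.exists_eq_add_of_le hpq
      exact le_trans (htel p k) (pow_anti (by omega))
    rcases le_total m m' with h | h
    · exact lt_of_le_of_lt (hb m m' hm h) hN
    · rw [v.map_sub_swap]
      exact lt_of_le_of_lt (hb m' m hm' h) hN
  have hc2 : CauchySeq (fun n => ((t n : UniformSpace.Completion K))) :=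
    hcauchy.map (UniformSpace.Completion.uniformContinuous_coe K)
  obtain ⟨s, hs⟩ := cauchySeq_tendsto_of_complete hc2
  refine ⟨s, ?_⟩
  have hsq : Tendsto (fun n => ((t n : UniformSpace.Completion K)) ^ 2) atTop (𝓝 (s ^ 2)) :=
    hs.pow 2
  have h0 : Tendsto (fun n => t n ^ 2 - u) atTop (𝓝 (0 : K)) := by
    rw [Filter.tendsto_def]
    intro S hS
    rcases Valued.mem_nhds_zero.mp hS with ⟨γ, hγ⟩
    obtain ⟨N, hN⟩ := hsmall (Units.mk0 (MonoidWithZeroHom.ValueGroup₀.embedding γ.1) ((map_ne_zero_iff _ MonoidWithZeroHom.ValueGroup₀.embedding_injective).mpr γ.ne_zero))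
    filter_upwards [Filter.eventually_ge_atTop N] with n hn
    exact hγ ((Valuation.restrict_lt_iff_lt_embedding (v := v)).mpr <| lt_of_le_of_lt (le_trans (key n).2 (pow_anti (by omega))) hN)
  have h1 : Tendsto (fun n => t n ^ 2) atTop (𝓝 u) := by
    have := h0.add_const u
    simpa using this
  have h3 : Tendsto (fun n => ((t n ^ 2 : K) : UniformSpace.Completion K)) atTop
      (𝓝 (u : UniformSpace.Completion K)) :=
    ((UniformSpace.Completion.continuous_coe K).tendsto u).comp h1
  have h4 : (fun n => ((t n ^ 2 : K) : UniformSpace.Completion K)) =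
      fun n => ((t n : UniformSpace.Completion K)) ^ 2 := by
    funext n
    exact UniformSpace.Completion.coeRingHom.map_pow (t n) 2
  rw [h4] at h3
  exact tendsto_nhds_unique hsq h3

@[simp, norm_cast, push_cast]
theorem completion_coe_pow {α : Type*} [Ring α] [UniformSpace α]
    [IsTopologicalRing α] [IsUniformAddGroup α] (a : α) (n : ℕ) :
    ((a ^ n : α) : UniformSpace.Completion α) = (a : UniformSpace.Completion α) ^ n :=
  UniformSpace.Completion.coeRingHom.map_pow a n

theorem quad_isotropic {K : Type*} [Field K] [hv : Valued K Zm0] (a b d u : K)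
    (h2 : Valued.v (2 : K) = 1) (hu : Valued.v (u - 1) < 1)
    (ha : a ≠ 0) (hd : d ^ 2 * u = -(a * b)) :
    ∃ y : Fin 2 → UniformSpace.Completion K, y ≠ 0 ∧
      ∑ i, ((![a, b] i : K) : UniformSpace.Completion K) * y i ^ 2 = 0 := by
  obtain ⟨s, hs⟩ := exists_sqrt_completion h2 u hu
  refine ⟨![(d : UniformSpace.Completion K) * s, (a : UniformSpace.Completion K)], ?_, ?_⟩
  · intro h
    have h1 := congrFun h 1
    simp only [Matrix.cons_val_one, Matrix.head_cons, Pi.zero_apply] at h1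
    rw [← UniformSpace.Completion.coe_zero] at h1
    exact ha (UniformSpace.Completion.coe_injective K h1)
  · rw [Fin.sum_univ_two]
    simp only [Matrix.cons_val_zero, Matrix.cons_val_one, Matrix.head_cons]
    have hc : ((d : UniformSpace.Completion K) * s) ^ 2
        = ((d ^ 2 * u : K) : UniformSpace.Completion K) := by
      rw [mul_pow, hs]
      push_cast
      ring
    rw [hc, hd]
    have : ((a : K) : UniformSpace.Completion K) * ((-(a * b) : K) : UniformSpace.Completion K)
        + ((b : K) : UniformSpace.Completion K) * ((a : K) : UniformSpace.Completion K) ^ 2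
        = ((a * -(a * b) + b * a ^ 2 : K) : UniformSpace.Completion K) := by
      push_cast
      ring
    rw [this, show a * -(a * b) + b * a ^ 2 = (0 : K) by ring,
      UniformSpace.Completion.coe_zero]


/-- Case 2 of the main theorem. Let `E` be a field of characteristic
`≠ 2`, `π ∈ Eˣ`, `r ≥ 1`, and `w` a `ℤ`-valuation on `E(X)` with `w 2 = 0`,
`0 ≤ w π < r` (multiplicatively `ofAdd (-r) < w π ≤ 1`) and `w X ≥ 1` (multiplicatively
`w X ≤ ofAdd (-1)`).  Then `⟨X^r - π, X^(r+1) + π⟩` is isotropic over `E(X)_w`. -/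
theorem statement7 {E : Type u} [Field E] (hchar : ringChar E ≠ 2)
    (π : E) (hπ0 : π ≠ 0) (r : ℕ) (hr : 0 < r)
    (w : Valuation (RatFunc E) Zm0) (hwZ : Function.Surjective w)
    (h2 : w 2 = 1)
    (hπ_nonneg : w (RatFunc.C π) ≤ 1)
    (hπ_lt : ((ofAdd (-(r : ℤ)) : Multiplicative ℤ) : Zm0) < w (RatFunc.C π))
    (hX : w RatFunc.X ≤ ((ofAdd (-1 : ℤ) : Multiplicative ℤ) : Zm0)) :
    IsotropicOverCompletion w
      ![RatFunc.X ^ r - RatFunc.C π, RatFunc.X ^ (r + 1) + RatFunc.C π] := by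
  classical
  letI : Valued (RatFunc E) Zm0 := Valued.mk' w
  have hCne : RatFunc.C π ≠ 0 :=
    fun h => hπ0 (RatFunc.C.injective (h.trans (map_zero _).symm))
  have hπw : w (RatFunc.C π) ≠ 0 := w.ne_zero_iff.mpr hCne
  -- powers of X
  have hXm : ∀ m : ℕ, w (RatFunc.X ^ m) ≤ ((ofAdd (-(m : ℤ)) : Multiplicative ℤ) : Zm0) := by
    intro m
    rw [map_pow]
    calc w RatFunc.X ^ m ≤ ((ofAdd (-1 : ℤ) : Multiplicative ℤ) : Zm0) ^ m :=
          pow_le_pow_left' hX m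
    _ = ((ofAdd (-(m : ℤ)) : Multiplicative ℤ) : Zm0) := by
        rw [← WithZero.coe_pow]
        congr 1
        rw [← ofAdd_nsmul]
        congr 1
        simp
  have hmono : ∀ m m' : ℤ, m < m' →
      ((ofAdd m : Multiplicative ℤ) : Zm0) < ((ofAdd m' : Multiplicative ℤ) : Zm0) := by
    intro m m' h
    rw [WithZero.coe_lt_coe]
    exact Multiplicative.ofAdd_lt.mpr h
  have hXlt : ∀ m : ℕ, r ≤ m → w (RatFunc.X ^ m) < w (RatFunc.C π) := by
    intro m hm
    refine lt_of_le_of_lt (hXm m) (lt_of_le_of_lt ?_ hπ_lt)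
    rcases eq_or_lt_of_le hm with h | h
    · rw [h]
    · exact le_of_lt (hmono _ _ (by exact_mod_cast neg_lt_neg (by exact_mod_cast h)))
  -- the valuation of X^r - C π
  have hwa : w (RatFunc.X ^ r - RatFunc.C π) = w (RatFunc.C π) := by
    rw [sub_eq_add_neg, w.map_add_eq_of_lt_right]
    · rw [w.map_neg]
    · rw [w.map_neg]; exact hXlt r le_rfl
  have ha0 : RatFunc.X ^ r - RatFunc.C π ≠ 0 :=
    w.ne_zero_iff.mp (by rw [hwa]; exact hπw)
  -- the unit u
  set P : RatFunc E := (RatFunc.C π - RatFunc.X ^ r) * (RatFunc.C π + RatFunc.X ^ (r + 1))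
    with hP
  set u : RatFunc E := P / RatFunc.C π ^ 2 with hu
  have hnum : u - 1 = (RatFunc.C π * RatFunc.X ^ (r + 1) - RatFunc.C π * RatFunc.X ^ r
      - RatFunc.X ^ (2 * r + 1)) / RatFunc.C π ^ 2 := by
    rw [hu, hP]
    field_simp
    ring
  have hterm1 : w (RatFunc.C π * RatFunc.X ^ (r + 1)) < w (RatFunc.C π) * w (RatFunc.C π) := by
    rw [map_mul]
    exact mul_lt_mul_of_le_of_lt_of_nonneg_of_pos le_rfl (hXlt (r + 1) (by omega)) zero_le (zero_lt_iff.mpr hπw)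
  have hterm2 : w (RatFunc.C π * RatFunc.X ^ r) < w (RatFunc.C π) * w (RatFunc.C π) := by
    rw [map_mul]
    exact mul_lt_mul_of_le_of_lt_of_nonneg_of_pos le_rfl (hXlt r le_rfl) zero_le (zero_lt_iff.mpr hπw)
  have hterm3 : w (RatFunc.X ^ (2 * r + 1)) < w (RatFunc.C π) * w (RatFunc.C π) := by
    refine lt_of_le_of_lt (hXm _) (lt_of_lt_of_le ?_ le_rfl)
    calc ((ofAdd (-(2 * r + 1 : ℕ) : ℤ) : Multiplicative ℤ) : Zm0)
        < ((ofAdd (-(r : ℤ)) : Multiplicative ℤ) : Zm0) *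
          ((ofAdd (-(r : ℤ)) : Multiplicative ℤ) : Zm0) := by
          rw [← WithZero.coe_mul, WithZero.coe_lt_coe, ← ofAdd_add]
          refine Multiplicative.ofAdd_lt.mpr (by push_cast; omega)
    _ < w (RatFunc.C π) * w (RatFunc.C π) :=
        mul_lt_mul_of_le_of_lt_of_nonneg_of_pos (le_of_lt hπ_lt) hπ_lt zero_le (zero_lt_iff.mpr hπw)
  have hu1 : w (u - 1) < 1 := by
    rw [hnum, map_div₀, map_pow]
    rw [div_lt_iff₀ (by rw [zero_lt_iff]; exact pow_ne_zero 2 hπw), one_mul, pow_two]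
    refine lt_of_le_of_lt (w.map_sub _ _) (max_lt ?_ hterm3)
    exact lt_of_le_of_lt (w.map_sub _ _) (max_lt hterm1 hterm2)
  have hd : RatFunc.C π ^ 2 * u
      = -((RatFunc.X ^ r - RatFunc.C π) * (RatFunc.X ^ (r + 1) + RatFunc.C π)) := by
    rw [hu, hP]
    field_simp
    ring
  exact quad_isotropic _ _ _ _ h2 hu1 ha0 hd
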